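/- arXiv:1702.06998 — 3 statements merged into one kernel-verified Lean document; each statement's English description precedes it below -/
import Mathlib

section
/- For every real number p with 1 < p < 2 there exists a constant C > 0 such that for all vectors ξ, η in ℝ^N, not both zero: |η - ξ|^2 · (|η| + |ξ|)^{p-2} ≤ C · ⟨|η|^{p-2} η - |ξ|^{p-2} ξ, η - ξ⟩. -/
/-!
With `s = ‖ξ‖`, `t = ‖η‖` and `I = ⟪η, ξ⟫`, both sides of the inequality are affine in `I`,
which ranges over `[-t s, t s]`. It therefore suffices to treat the collinear cases `I = ± t s`,
which are one-dimensional: for `I = t s` the concavity of `x ↦ x ^ (p - 1)` and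
`(t + s) ^ (p - 2) ≤ max t s ^ (p - 2)` give the bound with `C = 1 / (p - 1)`, and for `I = - t s`
it follows from the subadditivity of `x ↦ x ^ (p - 1)`.
-/

open Real

lemma rpow_le_rpow_add_mul_rpow_sub_one_mul_sub {q s t : ℝ} (hq0 : 0 ≤ q) (hq1 : q ≤ 1)
    (hs : 0 ≤ s) (ht : 0 < t) : s ^ q ≤ t ^ q + q * t ^ (q - 1) * (s - t) := by
  have hbern := rpow_one_add_le_one_add_mul_self (s := s / t - 1)
    (by linarith [div_nonneg hs ht.le]) hq0 hq1
  rw [add_sub_cancel, div_rpow hs ht.le, div_le_iff₀ (rpow_pos_of_pos ht q)] at hbern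
  rw [rpow_sub_one ht.ne']
  calc s ^ q ≤ (1 + q * (s / t - 1)) * t ^ q := hbern
    _ = t ^ q + q * (t ^ q / t) * (s - t) := by field_simp

lemma rpow_sub_two_mul_self {x p : ℝ} (hx : 0 ≤ x) (hp : p ≠ 1) :
    x ^ (p - 2) * x = x ^ (p - 1) := by
  rw [← rpow_add_one' hx (by contrapose! hp; linarith)]
  ring_nf

lemma sub_one_mul_sub_mul_rpow_add_le_rpow_sub_rpow {p s t : ℝ} (hp1 : 1 < p) (hp2 : p ≤ 2)
    (hs : 0 ≤ s) (hst : s ≤ t) :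
    (p - 1) * ((t - s) * (t + s) ^ (p - 2)) ≤ t ^ (p - 1) - s ^ (p - 1) := by
  rcases (hs.trans hst).eq_or_lt with rfl | ht
  · simp [le_antisymm hst hs]
  have hdecr : (t + s) ^ (p - 2) ≤ t ^ (p - 2) :=
    rpow_le_rpow_of_nonpos ht (le_add_of_nonneg_right hs) (by linarith)
  have htangent := rpow_le_rpow_add_mul_rpow_sub_one_mul_sub (q := p - 1) (by linarith)
    (by linarith) hs ht
  rw [show p - 1 - 1 = p - 2 by ring] at htangent
  nlinarith [mul_le_mul_of_nonneg_left hdecr (mul_nonneg (by linarith : 0 ≤ p - 1)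
    (by linarith : 0 ≤ t - s))]

lemma sub_one_mul_sub_sq_mul_rpow_add_le {p s t : ℝ} (hp1 : 1 < p) (hp2 : p ≤ 2)
    (hs : 0 ≤ s) (ht : 0 ≤ t) :
    (p - 1) * ((t - s) ^ 2 * (t + s) ^ (p - 2)) ≤ (t ^ (p - 1) - s ^ (p - 1)) * (t - s) := by
  wlog hst : s ≤ t generalizing s t
  · have := this ht hs (le_of_not_ge hst)
    rw [add_comm] at this
    linarith
  have := mul_le_mul_of_nonneg_right
    (sub_one_mul_sub_mul_rpow_add_le_rpow_sub_rpow hp1 hp2 hs hst) (sub_nonneg.2 hst)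
  linarith

lemma sub_one_mul_add_sq_mul_rpow_add_le {p s t : ℝ} (hp1 : 1 < p) (hp2 : p ≤ 2)
    (hs : 0 ≤ s) (ht : 0 ≤ t) :
    (p - 1) * ((t + s) ^ 2 * (t + s) ^ (p - 2)) ≤ (t ^ (p - 1) + s ^ (p - 1)) * (t + s) := by
  have hts : 0 ≤ t + s := add_nonneg ht hs
  have hsub : (t + s) ^ (p - 1) ≤ t ^ (p - 1) + s ^ (p - 1) :=
    rpow_add_le_add_rpow ht hs (by linarith) (by linarith)
  have hpow : (t + s) ^ 2 * (t + s) ^ (p - 2) = (t + s) ^ (p - 1) * (t + s) := by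
    rw [← rpow_sub_two_mul_self hts hp1.ne']; ring
  rw [hpow, ← mul_assoc]
  gcongr
  nlinarith [rpow_nonneg hts (p - 1)]

lemma nonneg_of_affine_nonneg_of_endpoints {a b x y z : ℝ} (hxz : x ≤ z) (hzy : z ≤ y)
    (hx : 0 ≤ a + b * x) (hy : 0 ≤ a + b * y) : 0 ≤ a + b * z := by
  rcases le_total 0 b with hb | hb <;> nlinarith

lemma sub_one_mul_sq_sub_mul_rpow_le_of_abs_le_mul {p s t I : ℝ} (hp1 : 1 < p) (hp2 : p ≤ 2)
    (hs : 0 ≤ s) (ht : 0 ≤ t) (hI : |I| ≤ t * s) :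
    (p - 1) * ((t ^ 2 - 2 * I + s ^ 2) * (t + s) ^ (p - 2)) ≤
      t ^ (p - 2) * t ^ 2 + s ^ (p - 2) * s ^ 2 - (t ^ (p - 2) + s ^ (p - 2)) * I := by
  have hparallel := sub_one_mul_sub_sq_mul_rpow_add_le hp1 hp2 hs ht
  have hantiparallel := sub_one_mul_add_sq_mul_rpow_add_le hp1 hp2 hs ht
  rw [← rpow_sub_two_mul_self ht hp1.ne', ← rpow_sub_two_mul_self hs hp1.ne']
    at hparallel hantiparallel
  obtain ⟨hI₁, hI₂⟩ := abs_le.1 hI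
  have := nonneg_of_affine_nonneg_of_endpoints
    (a := t ^ (p - 2) * t ^ 2 + s ^ (p - 2) * s ^ 2
      - (p - 1) * ((t ^ 2 + s ^ 2) * (t + s) ^ (p - 2)))
    (b := 2 * (p - 1) * (t + s) ^ (p - 2) - (t ^ (p - 2) + s ^ (p - 2))) hI₁ hI₂
    (by linarith) (by linarith)
  linarith

theorem sub_one_mul_norm_sub_sq_mul_rpow_le_inner {E : Type*} [NormedAddCommGroup E]
    [InnerProductSpace ℝ E] {p : ℝ} (hp1 : 1 < p) (hp2 : p ≤ 2) (ξ η : E) :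
    (p - 1) * (‖η - ξ‖ ^ 2 * (‖η‖ + ‖ξ‖) ^ (p - 2)) ≤
      inner ℝ (‖η‖ ^ (p - 2) • η - ‖ξ‖ ^ (p - 2) • ξ) (η - ξ) := by
  have hI : |inner ℝ η ξ| ≤ ‖η‖ * ‖ξ‖ := abs_real_inner_le_norm η ξ
  have hinner : inner ℝ (‖η‖ ^ (p - 2) • η - ‖ξ‖ ^ (p - 2) • ξ) (η - ξ) =
      ‖η‖ ^ (p - 2) * ‖η‖ ^ 2 + ‖ξ‖ ^ (p - 2) * ‖ξ‖ ^ 2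
        - (‖η‖ ^ (p - 2) + ‖ξ‖ ^ (p - 2)) * inner ℝ η ξ := by
    simp only [inner_sub_left, inner_sub_right, real_inner_smul_left, real_inner_self_eq_norm_sq,
      real_inner_comm η ξ]
    ring
  rw [hinner, norm_sub_sq_real]
  exact sub_one_mul_sq_sub_mul_rpow_le_of_abs_le_mul hp1 hp2 (norm_nonneg ξ) (norm_nonneg η) hI

theorem pLaplacian_monotonicity_singular (N : ℕ) (p : ℝ) (hp1 : 1 < p) (hp2 : p < 2) :
    ∃ C : ℝ, 0 < C ∧ ∀ ξ η : EuclideanSpace ℝ (Fin N), ¬(ξ = 0 ∧ η = 0) →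
      ‖η - ξ‖ ^ (2 : ℕ) * (‖η‖ + ‖ξ‖) ^ (p - 2) ≤
        C * (inner ℝ (‖η‖ ^ (p - 2) • η - ‖ξ‖ ^ (p - 2) • ξ) (η - ξ) : ℝ) := by
  have hp : 0 < p - 1 := sub_pos.2 hp1
  refine ⟨(p - 1)⁻¹, inv_pos.2 hp, fun ξ η _ => ?_⟩
  rw [le_inv_mul_iff₀ hp]
  exact sub_one_mul_norm_sub_sq_mul_rpow_le_inner hp1 hp2.le ξ η
end

section
/- Let u be a nonnegative continuous function on an open set Ω ⊆ ℝ^N that is locally Lipschitz, and suppose there are constants c̃ > 0, L > 0, r̃₀ > 0 such that for every ball B_r(x) ⊆ Ω with x ∈ ∂{u>0} and 0 < r ≤ r̃₀, the average (1/|B_r(x)|) ∫_{B_r(x)} u ≥ c̃ r, and |∇u| ≤ L a.e. on Ω. Then for every such ball, |B_r(x) ∩ {u>0}| / |B_r(x)| ≥ c̃ / L. -/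
/-!
At a free boundary point `x` the Lipschitz function `u` vanishes, so the Lipschitz bound gives
`0 ≤ u ≤ L r` on `B_r(x)`, while `u = 0` off `{u > 0}`. Hence `∫_{B_r(x)} u ≤ L r |B_r(x) ∩ {u > 0}|`,
and comparing with the lower bound `c̃ r |B_r(x)|` on the same integral gives the density estimate.
-/

open MeasureTheory Metric Filter Topology
open scoped NNReal ENNReal

theorem ContinuousAt.eq_zero_of_mem_frontier_pos {X : Type*} [TopologicalSpace X] {u : X → ℝ}
    {x : X} (hu : ContinuousAt u x) (hx : x ∈ frontier {y | 0 < u y}) : u x = 0 := by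
  refine le_antisymm (not_lt.1 fun hpos => hx.2 ?_) (not_lt.1 fun hneg => ?_)
  · exact mem_interior_iff_mem_nhds.2 (hu.eventually (lt_mem_nhds hpos))
  · obtain ⟨y, hy, hy'⟩ :=
      ((mem_closure_iff_frequently.1 hx.1).and_eventually (hu.eventually (gt_mem_nhds hneg))).exists
    exact (lt_asymm hy hy').elim

section Ball

variable {X : Type*} [PseudoMetricSpace X] [ProperSpace X] [MeasurableSpace X]
  [OpensMeasurableSpace X] {μ : Measure X} [IsFiniteMeasureOnCompacts μ]
  {u : X → ℝ} {K : ℝ≥0} {s : Set X} {x : X} {r : ℝ}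

theorem LipschitzOnWith.setIntegral_ball_le (hu : LipschitzOnWith K u s) (hball : ball x r ⊆ s)
    (hx : x ∈ s) (hux : u x = 0) (hnn : ∀ y ∈ ball x r, 0 ≤ u y) :
    ∫ y in ball x r, u y ∂μ ≤ K * r * μ.real (ball x r ∩ {y | 0 < u y}) := by
  have hbound : ∀ y ∈ ball x r, ‖u y‖ ≤ K * r := fun y hy =>
    calc ‖u y‖ = dist (u y) (u x) := by rw [hux, dist_zero_right]
      _ ≤ K * dist y x := hu.dist_le_mul y (hball hy) x hx
      _ ≤ K * r := by gcongr; exact (mem_ball.1 hy).le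
  rw [setIntegral_eq_of_subset_of_forall_sdiff_eq_zero measurableSet_ball Set.inter_subset_left
    fun y hy => le_antisymm (not_lt.1 fun hpos => hy.2 ⟨hy.1, hpos⟩) (hnn y hy.1)]
  exact (le_abs_self _).trans <| norm_setIntegral_le_of_norm_le_const
    ((measure_mono Set.inter_subset_left).trans_lt measure_ball_lt_top) fun y hy => hbound y hy.1

theorem LipschitzOnWith.ofReal_div_mul_measure_ball_le [μ.IsOpenPosMeasure] {c : ℝ}
    (hK : 0 < K) (hr : 0 < r) (hu : LipschitzOnWith K u s) (hball : ball x r ⊆ s)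
    (hux : u x = 0) (hnn : ∀ y ∈ ball x r, 0 ≤ u y)
    (havg : c * r ≤ 1 / μ.real (ball x r) * ∫ y in ball x r, u y ∂μ) :
    ENNReal.ofReal (c / K) * μ (ball x r) ≤ μ (ball x r ∩ {y | 0 < u y}) := by
  have hV : 0 < μ.real (ball x r) :=
    ENNReal.toReal_pos (measure_ball_pos μ x hr).ne' measure_ball_lt_top.ne
  have hint := hu.setIntegral_ball_le (μ := μ) hball (hball (mem_ball_self hr)) hux hnn
  have hdensity : c / K * μ.real (ball x r) ≤ μ.real (ball x r ∩ {y | 0 < u y}) := by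
    rw [div_mul_eq_mul_div, div_le_iff₀ (by exact_mod_cast hK)]
    rw [one_div, inv_mul_eq_div, le_div_iff₀ hV] at havg
    nlinarith
  calc ENNReal.ofReal (c / K) * μ (ball x r)
      = ENNReal.ofReal (c / K * μ.real (ball x r)) := by
        rw [ENNReal.ofReal_mul' hV.le, ofReal_measureReal measure_ball_lt_top.ne]
    _ ≤ ENNReal.ofReal (μ.real (ball x r ∩ {y | 0 < u y})) := ENNReal.ofReal_le_ofReal hdensity
    _ ≤ μ (ball x r ∩ {y | 0 < u y}) := ENNReal.ofReal_toReal_le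

end Ball

theorem positivity_set_density_lower_bound_general (N : ℕ)
    (Ω : Set (EuclideanSpace ℝ (Fin N)))
    (u : EuclideanSpace ℝ (Fin N) → ℝ)
    (hnn : ∀ x ∈ Ω, 0 ≤ u x)
    (ctil L rtil : ℝ) (hL : 0 < L)
    (hlip : LipschitzOnWith (Real.toNNReal L) u Ω)
    (havg : ∀ x r, x ∈ frontier {y | 0 < u y} → 0 < r → r ≤ rtil →
      Metric.ball x r ⊆ Ω →
      ctil * r ≤ (1 / (volume (Metric.ball x r)).toReal) * ∫ y in Metric.ball x r, u y) :
    ∀ x r, x ∈ frontier {y | 0 < u y} → 0 < r → r ≤ rtil → Metric.ball x r ⊆ Ω →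
      ENNReal.ofReal (ctil / L) * volume (Metric.ball x r) ≤
        volume (Metric.ball x r ∩ {y | 0 < u y}) := by
  intro x r hxf hr hrr hball
  have hΩ : Ω ∈ 𝓝 x := mem_of_superset (ball_mem_nhds x hr) hball
  have hux : u x = 0 := (hlip.continuousOn.continuousAt hΩ).eq_zero_of_mem_frontier_pos hxf
  simpa only [Real.coe_toNNReal L hL.le] using
    hlip.ofReal_div_mul_measure_ball_le (Real.toNNReal_pos.2 hL) hr hball hux
      (fun y hy => hnn y (hball hy)) (havg x r hxf hr hrr hball)

theorem positivity_set_density_lower_bound (N : ℕ)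
    (Ω : Set (EuclideanSpace ℝ (Fin N))) (hΩ : IsOpen Ω)
    (u : EuclideanSpace ℝ (Fin N) → ℝ)
    (hcont : ContinuousOn u Ω) (hnn : ∀ x ∈ Ω, 0 ≤ u x)
    (ctil L rtil : ℝ) (hc : 0 < ctil) (hL : 0 < L) (hr : 0 < rtil)
    (hlip : LipschitzOnWith (Real.toNNReal L) u Ω)
    (havg : ∀ x r, x ∈ frontier {y | 0 < u y} → 0 < r → r ≤ rtil →
      Metric.ball x r ⊆ Ω →
      ctil * r ≤ (1 / (volume (Metric.ball x r)).toReal) * ∫ y in Metric.ball x r, u y) :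
    ∀ x r, x ∈ frontier {y | 0 < u y} → 0 < r → r ≤ rtil → Metric.ball x r ⊆ Ω →
      ENNReal.ofReal (ctil / L) * volume (Metric.ball x r) ≤
        volume (Metric.ball x r ∩ {y | 0 < u y}) :=
  positivity_set_density_lower_bound_general N Ω u hnn ctil L rtil hL hlip havg
end

section
/- Let u be continuous and nonnegative on an open set Ω ⊆ ℝ^N, L-Lipschitz on a ball B_{2R}(x₀) ⊆ Ω, and nondegenerate in the sense that for every y ∈ ∂{u>0} ∩ B_R(x₀) and ρ ≤ ρ₀, sup_{B_ρ(y)} u ≥ c_min ρ. Suppose x₀ ∈ ∂{u>0} and the exterior unit normal in measure-theoretic sense at x₀ is e_N, i.e. (1/r^N)∫_{B_r(x₀)} |χ_{{u>0}} − χ_{{x_N < x₀·e_N}}| dx → 0 as r → 0. Then for every 0 < σ < σ₀ (σ₀ depending on N, c_min, L) there is r_σ > 0 such that for all r ≤ r_σ: u(x) = 0 for every x ∈ B_r(x₀) with ⟨x − x₀, e_N⟩ ≥ σ r. -/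
/-!
If `u x > 0` at a point with `⟪x - x₀, e_N⟫ ≥ σ r`, then either `u > 0` on `B(x, σr/3)`, or this
ball contains a free boundary point `y`; nondegeneracy gives `z ∈ B(y, σr/3)` with
`u z > c_min σ r / 6`, and the Lipschitz bound keeps `u` positive on `B(z, κσr/3)`, where `κ`
depends only on `c_min` and `L`. Either way a ball of radius comparable to `σ r` lies in
`B(x₀, 2r) ∩ {u > 0} ∩ {⟪· - x₀, e_N⟫ > 0}`, where the integrand of the density condition equals
`1`, so the normalised integral at scale `2r` stays above `(κσ/6)^N |B(0, 1)|`, contradicting its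
convergence to `0`.
-/

open MeasureTheory Metric Set Module
open scoped NNReal InnerProductSpace

theorem IsPreconnected.inter_frontier_nonempty {X : Type*} [TopologicalSpace X] {s t : Set X}
    (hs : IsPreconnected s) (hst : (s ∩ t).Nonempty) (hst' : (s \ t).Nonempty) :
    (s ∩ frontier t).Nonempty := by
  by_contra h
  have hcover : s ⊆ interior t ∪ interior tᶜ := by
    intro x hx
    by_contra hx'
    rw [interior_compl, mem_union, not_or, mem_compl_iff, not_not] at hx'
    exact h ⟨x, hx, hx'.2, hx'.1⟩
  have hin : (s ∩ interior t).Nonempty := by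
    obtain ⟨x, hxs, hxt⟩ := hst
    exact ⟨x, hxs, (hcover hxs).resolve_right fun hx => interior_subset hx hxt⟩
  have hout : (s ∩ interior tᶜ).Nonempty := by
    obtain ⟨x, hxs, hxt⟩ := hst'
    exact ⟨x, hxs, (hcover hxs).resolve_left fun hx => hxt (interior_subset hx)⟩
  obtain ⟨x, -, hx, hx'⟩ := hs _ _ isOpen_interior isOpen_interior hcover hin hout
  exact interior_subset hx' (interior_subset hx)

theorem LipschitzOnWith.ball_subset_pos {α : Type*} [PseudoMetricSpace α] {u : α → ℝ}
    {K : ℝ≥0} {t : Set α} {z : α} {δ : ℝ} (hlip : LipschitzOnWith K u t) (hzt : ball z δ ⊆ t)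
    (hδ : K * δ < u z) : ball z δ ⊆ {q | 0 < u q} := by
  intro q hq
  have hz : z ∈ t := hzt (mem_ball_self (pos_of_mem_ball hq))
  have hdist : |u q - u z| ≤ K * dist q z := by
    simpa [Real.dist_eq] using hlip.dist_le_mul q (hzt hq) z hz
  have hKdist : K * dist q z ≤ K * δ := mul_le_mul_of_nonneg_left (mem_ball.1 hq).le K.2
  simp only [mem_ofPred_eq]
  linarith [neg_abs_le (u q - u z)]

theorem exists_pos_le_one_mul_le_half (K : ℝ≥0) {c : ℝ} (hc : 0 < c) :
    ∃ κ : ℝ, 0 < κ ∧ κ ≤ 1 ∧ K * κ ≤ c / 2 := by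
  refine ⟨min 1 (c / (2 * (K + 1))), lt_min one_pos (by positivity), min_le_left _ _, ?_⟩
  calc (K : ℝ) * min 1 (c / (2 * (K + 1))) ≤ (K + 1) * (c / (2 * (K + 1))) :=
        mul_le_mul (by linarith) (min_le_right _ _) (le_min zero_le_one (by positivity))
          (by positivity)
    _ = c / 2 := by field_simp

theorem exists_ball_subset_pos_of_nondegenerate {E : Type*} [NormedAddCommGroup E]
    [NormedSpace ℝ E] {u : E → ℝ} {K : ℝ≥0} {κ c s : ℝ} {x : E} (hκ : κ ≤ 1)
    (hKκ : K * κ ≤ c / 2) (hc : 0 < c) (hs : 0 < s) (hux : 0 < u x)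
    (hlip : LipschitzOnWith K u (ball x (3 * s)))
    (hnondeg : ∀ y ∈ frontier {z | 0 < u z} ∩ ball x s, c * s ≤ sSup (u '' ball y s)) :
    ∃ w, ball w (κ * s) ⊆ ball x (3 * s) ∩ {z | 0 < u z} := by
  have hκs : κ * s ≤ s := by nlinarith
  by_cases hpos : ball x s ⊆ {z | 0 < u z}
  · refine ⟨x, fun q hq => ?_⟩
    have hq' : q ∈ ball x s := ball_subset_ball hκs hq
    exact ⟨ball_subset_ball (by linarith) hq', hpos hq'⟩
  obtain ⟨y, hyx, hyfr⟩ : (ball x s ∩ frontier {z | 0 < u z}).Nonempty :=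
    (convex_ball x s).isPreconnected.inter_frontier_nonempty ⟨x, mem_ball_self hs, hux⟩
      (sdiff_nonempty.2 hpos)
  obtain ⟨_, ⟨z, hzy, rfl⟩, huz⟩ : ∃ v ∈ u '' ball y s, c * s / 2 < v :=
    exists_lt_of_lt_csSup ((nonempty_ball.2 hs).image u)
      (by linarith [hnondeg y ⟨hyfr, hyx⟩, mul_pos hc hs])
  have hzx : ball z (κ * s) ⊆ ball x (3 * s) := by
    intro q hq
    rw [mem_ball] at hq hzy hyx ⊢
    linarith [dist_triangle4 q z y x]
  refine ⟨z, subset_inter hzx (hlip.ball_subset_pos hzx ?_)⟩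
  calc (K : ℝ) * (κ * s) = K * κ * s := by ring
    _ ≤ c / 2 * s := mul_le_mul_of_nonneg_right hKκ hs.le
    _ < u z := by linarith

theorem ball_subset_inner_pos {E : Type*} [NormedAddCommGroup E] [InnerProductSpace ℝ E]
    {e x x₀ : E} {t : ℝ} (he : ‖e‖ ≤ 1) (ht : t ≤ ⟪x - x₀, e⟫_ℝ) :
    ball x t ⊆ {q | 0 < ⟪q - x₀, e⟫_ℝ} := by
  intro q hq
  have hsplit : ⟪q - x₀, e⟫_ℝ = ⟪q - x, e⟫_ℝ + ⟪x - x₀, e⟫_ℝ := by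
    rw [← inner_add_left, sub_add_sub_cancel]
  have hdist : |⟪q - x, e⟫_ℝ| ≤ dist q x :=
    (abs_real_inner_le_norm _ _).trans
      (by rw [dist_eq_norm]; exact mul_le_of_le_one_right (norm_nonneg _) he)
  rw [mem_ball] at hq
  simp only [mem_ofPred_eq]
  linarith [neg_abs_le ⟪q - x, e⟫_ℝ]

theorem exists_ball_subset_pos_inter_halfSpace {E : Type*} [NormedAddCommGroup E]
    [InnerProductSpace ℝ E] {u : E → ℝ} {K : ℝ≥0} {κ c σ r : ℝ} {x x₀ e : E} (he : ‖e‖ ≤ 1)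
    (hκ : κ ≤ 1) (hKκ : K * κ ≤ c / 2) (hc : 0 < c) (hσ : 0 < σ) (hr : 0 < r)
    (hx : x ∈ ball x₀ r) (hxσ : σ * r ≤ ⟪x - x₀, e⟫_ℝ) (hux : 0 < u x)
    (hlip : LipschitzOnWith K u (ball x₀ (2 * r)))
    (hnondeg : ∀ y ∈ frontier {z | 0 < u z} ∩ ball x₀ (2 * r),
      c * (σ * r / 3) ≤ sSup (u '' ball y (σ * r / 3))) :
    ∃ w, ball w (κ * (σ * r / 3)) ⊆
      ball x₀ (2 * r) ∩ {q | 0 < u q} ∩ {q | 0 < ⟪q - x₀, e⟫_ℝ} := by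
  have hσr : σ * r < r := calc
    σ * r ≤ ‖x - x₀‖ * ‖e‖ := hxσ.trans (real_inner_le_norm _ _)
    _ ≤ ‖x - x₀‖ := mul_le_of_le_one_right (norm_nonneg _) he
    _ < r := by rwa [← dist_eq_norm, ← mem_ball]
  have hxx₀ : ball x (3 * (σ * r / 3)) ⊆ ball x₀ (2 * r) := fun q hq => by
    rw [mem_ball] at hq hx ⊢
    linarith [dist_triangle q x x₀]
  obtain ⟨w, hw⟩ := exists_ball_subset_pos_of_nondegenerate hκ hKκ hc (by positivity) hux
    (hlip.mono hxx₀) fun y hy =>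
      hnondeg y ⟨hy.1, hxx₀ (ball_subset_ball (by linarith [mul_pos hσ hr]) hy.2)⟩
  exact ⟨w, fun q hq =>
    ⟨⟨hxx₀ (hw hq).1, (hw hq).2⟩, ball_subset_inner_pos he (by linarith) (hw hq).1⟩⟩

theorem integrableOn_abs_ite_pos_sub_ite_neg {α : Type*} [MeasurableSpace α] {μ : Measure α}
    {s : Set α} {u g : α → ℝ} (hs : μ s < ⊤) (hu : AEMeasurable u (μ.restrict s))
    (hg : AEMeasurable g (μ.restrict s)) :
    IntegrableOn (fun x => |(if 0 < u x then (1 : ℝ) else 0) - (if g x < 0 then 1 else 0)|)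
      s μ := by
  refine IntegrableOn.of_bound hs ?_ 1 (ae_of_all _ fun x => ?_)
  · exact (((measurable_const.ite measurableSet_Ioi measurable_const).comp_aemeasurable hu).sub
      ((measurable_const.ite measurableSet_Iio measurable_const).comp_aemeasurable hg)).abs
      |>.aestronglyMeasurable
  · split_ifs <;> norm_num

theorem pow_div_mul_measureReal_ball_le_setIntegral {E : Type*} [NormedAddCommGroup E]
    [NormedSpace ℝ E] [MeasurableSpace E] [BorelSpace E] [FiniteDimensional ℝ E] (μ : Measure E)
    [μ.IsAddHaarMeasure] {f : E → ℝ} {x w : E} {ρ δ : ℝ} (hρ : 0 < ρ) (hδ : 0 < δ)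
    (hsub : ball w δ ⊆ ball x ρ) (hf : IntegrableOn f (ball x ρ) μ)
    (hf0 : ∀ y ∈ ball x ρ, 0 ≤ f y) (hf1 : ∀ y ∈ ball w δ, f y = 1) :
    (δ / ρ) ^ finrank ℝ E * μ.real (ball 0 1) ≤
      1 / ρ ^ finrank ℝ E * ∫ y in ball x ρ, f y ∂μ := by
  have hvol : μ.real (ball w δ) = δ ^ finrank ℝ E * μ.real (ball 0 1) := by
    rw [measureReal_def, Measure.addHaar_ball_of_pos μ w hδ, ENNReal.toReal_mul,
      ENNReal.toReal_ofReal (by positivity), measureReal_def]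
  have hint : μ.real (ball w δ) ≤ ∫ y in ball x ρ, f y ∂μ :=
    calc μ.real (ball w δ) = ∫ y in ball w δ, f y ∂μ := by
          rw [setIntegral_congr_fun measurableSet_ball hf1]; simp
      _ ≤ ∫ y in ball x ρ, f y ∂μ :=
          setIntegral_mono_set hf (ae_restrict_of_forall_mem measurableSet_ball hf0)
            hsub.eventuallyLE
  calc (δ / ρ) ^ finrank ℝ E * μ.real (ball 0 1) = 1 / ρ ^ finrank ℝ E * μ.real (ball w δ) := by
        rw [hvol, div_pow]; ring
    _ ≤ 1 / ρ ^ finrank ℝ E * ∫ y in ball x ρ, f y ∂μ :=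
        mul_le_mul_of_nonneg_left hint (by positivity)

theorem pow_div_mul_measureReal_ball_le_setIntegral_discrepancy {E : Type*}
    [NormedAddCommGroup E] [InnerProductSpace ℝ E] [MeasurableSpace E] [BorelSpace E]
    [FiniteDimensional ℝ E] (μ : Measure E) [μ.IsAddHaarMeasure] {u : E → ℝ} {x₀ e w : E}
    {ρ δ : ℝ} (hρ : 0 < ρ) (hδ : 0 < δ) (hu : ContinuousOn u (ball x₀ ρ))
    (hw : ball w δ ⊆ ball x₀ ρ ∩ {q | 0 < u q} ∩ {q | 0 < ⟪q - x₀, e⟫_ℝ}) :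
    (δ / ρ) ^ finrank ℝ E * μ.real (ball 0 1) ≤ 1 / ρ ^ finrank ℝ E *
      ∫ x in ball x₀ ρ,
        |(if 0 < u x then (1 : ℝ) else 0) - (if ⟪x - x₀, e⟫_ℝ < 0 then 1 else 0)| ∂μ := by
  refine pow_div_mul_measureReal_ball_le_setIntegral μ hρ hδ (fun q hq => (hw hq).1.1)
    (integrableOn_abs_ite_pos_sub_ite_neg measure_ball_lt_top
      (hu.aemeasurable measurableSet_ball) (by fun_prop)) (fun _ _ => abs_nonneg _)
    fun q hq => ?_
  have hpos : 0 < u q := (hw hq).1.2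
  have hhalf : 0 < ⟪q - x₀, e⟫_ℝ := (hw hq).2
  simp [hpos, not_lt.2 hhalf.le]

theorem flatness_at_measure_theoretic_normal_points_general (n : ℕ)
    (Ω : Set (EuclideanSpace ℝ (Fin (n + 1))))
    (u : EuclideanSpace ℝ (Fin (n + 1)) → ℝ)
    (hnn : ∀ x ∈ Ω, 0 ≤ u x)
    (L cmin R ρ₀ : ℝ) (hcmin : 0 < cmin) (hR : 0 < R) (hρ₀ : 0 < ρ₀)
    (x₀ : EuclideanSpace ℝ (Fin (n + 1)))
    (hball : Metric.ball x₀ (2 * R) ⊆ Ω)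
    (hlip : LipschitzOnWith (Real.toNNReal L) u (Metric.ball x₀ (2 * R)))
    (hnondeg : ∀ y ∈ frontier {z | 0 < u z} ∩ Metric.ball x₀ R, ∀ ρ : ℝ,
      0 < ρ → ρ ≤ ρ₀ → cmin * ρ ≤ sSup (u '' Metric.ball y ρ))
    (eN : EuclideanSpace ℝ (Fin (n + 1)))
    (heN : eN = EuclideanSpace.single (Fin.last n) 1)
    (hnormal : Filter.Tendsto
      (fun r : ℝ => (1 / r ^ (n + 1)) *
        ∫ x in Metric.ball x₀ r,
          |(if 0 < u x then (1 : ℝ) else 0) -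
            (if (inner ℝ (x - x₀) eN : ℝ) < 0 then (1 : ℝ) else 0)|)
      (nhdsWithin 0 (Set.Ioi 0)) (nhds 0)) :
    ∃ σ₀ : ℝ, 0 < σ₀ ∧ ∀ σ : ℝ, 0 < σ → σ < σ₀ →
      ∃ rσ : ℝ, 0 < rσ ∧ ∀ r : ℝ, 0 < r → r ≤ rσ →
        ∀ x ∈ Metric.ball x₀ r, σ * r ≤ (inner ℝ (x - x₀) eN : ℝ) → u x = 0 := by
  obtain ⟨κ, hκ, hκ1, hKκ⟩ := exists_pos_le_one_mul_le_half L.toNNReal hcmin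
  refine ⟨1, one_pos, fun σ hσ hσ1 => ?_⟩
  have hε : 0 < (κ * σ / 6) ^ (n + 1) *
      volume.real (ball (0 : EuclideanSpace ℝ (Fin (n + 1))) 1) :=
    mul_pos (by positivity)
      (ENNReal.toReal_pos (measure_ball_pos _ _ one_pos).ne' measure_ball_lt_top.ne)
  obtain ⟨δ, hδ, hsmall⟩ :=
    (nhdsGT_basis 0).eventually_iff.1 (hnormal.eventually (gt_mem_nhds hε))
  refine ⟨min (δ / 4) (min (R / 2) ρ₀), by positivity, fun r hr hrle x hx hxσ => ?_⟩
  simp only [le_min_iff] at hrle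
  obtain ⟨hrδ, hrR, hrρ⟩ := hrle
  by_contra hne
  have hux : 0 < u x := (hnn x (hball (ball_subset_ball (by linarith) hx))).lt_of_ne' hne
  have h2r : ball x₀ (2 * r) ⊆ ball x₀ (2 * R) := ball_subset_ball (by linarith)
  obtain ⟨w, hw⟩ := exists_ball_subset_pos_inter_halfSpace (by simp [heN]) hκ1 hKκ hcmin hσ hr
    hx hxσ hux (hlip.mono h2r) fun y hy =>
      hnondeg y ⟨hy.1, ball_subset_ball (by linarith) hy.2⟩ _ (by positivity) (by nlinarith)
  have hlow := pow_div_mul_measureReal_ball_le_setIntegral_discrepancy volume (by positivity)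
    (by positivity) (hlip.continuousOn.mono h2r) hw
  rw [finrank_euclideanSpace_fin, show κ * (σ * r / 3) / (2 * r) = κ * σ / 6 by field_simp; ring]
    at hlow
  linarith [hsmall (show 2 * r ∈ Ioo 0 δ from ⟨by positivity, by linarith⟩)]

theorem flatness_at_measure_theoretic_normal_points (n : ℕ)
    (Ω : Set (EuclideanSpace ℝ (Fin (n + 1)))) (hΩ : IsOpen Ω)
    (u : EuclideanSpace ℝ (Fin (n + 1)) → ℝ)
    (hcont : ContinuousOn u Ω) (hnn : ∀ x ∈ Ω, 0 ≤ u x)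
    (L cmin R ρ₀ : ℝ) (hL : 0 < L) (hcmin : 0 < cmin) (hR : 0 < R) (hρ₀ : 0 < ρ₀)
    (x₀ : EuclideanSpace ℝ (Fin (n + 1)))
    (hball : Metric.ball x₀ (2 * R) ⊆ Ω)
    (hlip : LipschitzOnWith (Real.toNNReal L) u (Metric.ball x₀ (2 * R)))
    (hnondeg : ∀ y ∈ frontier {z | 0 < u z} ∩ Metric.ball x₀ R, ∀ ρ : ℝ,
      0 < ρ → ρ ≤ ρ₀ → cmin * ρ ≤ sSup (u '' Metric.ball y ρ))
    (hx₀ : x₀ ∈ frontier {z | 0 < u z})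
    (eN : EuclideanSpace ℝ (Fin (n + 1)))
    (heN : eN = EuclideanSpace.single (Fin.last n) 1)
    (hnormal : Filter.Tendsto
      (fun r : ℝ => (1 / r ^ (n + 1)) *
        ∫ x in Metric.ball x₀ r,
          |(if 0 < u x then (1 : ℝ) else 0) -
            (if (inner ℝ (x - x₀) eN : ℝ) < 0 then (1 : ℝ) else 0)|)
      (nhdsWithin 0 (Set.Ioi 0)) (nhds 0)) :
    ∃ σ₀ : ℝ, 0 < σ₀ ∧ ∀ σ : ℝ, 0 < σ → σ < σ₀ →
      ∃ rσ : ℝ, 0 < rσ ∧ ∀ r : ℝ, 0 < r → r ≤ rσ →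
        ∀ x ∈ Metric.ball x₀ r, σ * r ≤ (inner ℝ (x - x₀) eN : ℝ) → u x = 0 :=
  flatness_at_measure_theoretic_normal_points_general n Ω u hnn L cmin R ρ₀ hcmin hR hρ₀ x₀ hball
    hlip hnondeg eN heN hnormal
end
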